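/- Let x₁, ..., xₙ ∈ ℝⁿ satisfy det(x₁,...,xₙ) = ∑_{i=1}^n |xᵢ|ⁿ / n. Then |x₁| = |x₂| = ... = |xₙ| and, if this common norm is nonzero, the vectors x₁,...,xₙ are pairwise orthogonal and form a positively oriented basis of ℝⁿ. -/

import Mathlib

/-!
Hadamard's inequality and AM-GM give `det x ≤ ∏ i, ‖x i‖ ≤ ∑ i, ‖x i‖ ^ n / n`, so the hypothesis
forces equality in both. Equality in AM-GM makes the norms equal. In the Gram–Schmidt basis `b`
of `x` the determinant is `∏ i, ⟪b i, x i⟫`, so equality in Hadamard's inequality means equality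
in every Cauchy–Schwarz factor: each nonzero `x i` is a multiple of `b i`, hence the `x i` are
orthogonal, and `det x = ∏ i, ‖x i‖ > 0`.
-/

open Finset Module

namespace Real

variable {ι : Type*} [Fintype ι]

theorem prod_le_sum_pow_card_div_card [Nonempty ι] {a : ι → ℝ} (ha : ∀ i, 0 ≤ a i) :
    ∏ i, a i ≤ ∑ i, a i ^ Fintype.card ι / Fintype.card ι := by
  have hN : Fintype.card ι ≠ 0 := Fintype.card_ne_zero
  have := geom_mean_le_arith_mean_weighted univ (fun _ ↦ (Fintype.card ι : ℝ)⁻¹)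
    (fun i ↦ a i ^ Fintype.card ι) (fun _ _ ↦ by positivity) (by simp [hN])
    (fun i _ ↦ by have := ha i; positivity)
  simpa [pow_rpow_inv_natCast (ha _) hN, div_eq_inv_mul] using this

theorem eq_of_sum_pow_card_div_card_le_prod {a : ι → ℝ} (ha : ∀ i, 0 ≤ a i)
    (h : ∑ i, a i ^ Fintype.card ι / Fintype.card ι ≤ ∏ i, a i) (i j : ι) : a i = a j := by
  have : Nonempty ι := ⟨i⟩
  have hN : Fintype.card ι ≠ 0 := Fintype.card_ne_zero
  have hconst := (geom_mean_eq_arith_mean_weighted_iff_of_pos univ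
    (fun _ ↦ (Fintype.card ι : ℝ)⁻¹) (fun i ↦ a i ^ Fintype.card ι) (fun _ _ ↦ by positivity)
    (by simp [hN]) (fun i _ ↦ by have := ha i; positivity)).1
  simp only [pow_rpow_inv_natCast (ha _) hN, ← div_eq_inv_mul, mem_univ, forall_const] at hconst
  exact (pow_left_inj₀ (ha i) (ha j) hN).1
    (hconst ((prod_le_sum_pow_card_div_card ha).antisymm h) i j)

end Real

theorem Finset.eq_of_prod_eq_prod_of_le {ι : Type*} {s : Finset ι} {f g : ι → ℝ}
    (hf : ∀ i ∈ s, 0 ≤ f i) (hfg : ∀ i ∈ s, f i ≤ g i) (hg : ∀ i ∈ s, 0 < g i)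
    (h : ∏ i ∈ s, f i = ∏ i ∈ s, g i) : ∀ i ∈ s, f i = g i := by
  by_contra! ⟨i, hi, hne⟩
  have hf_pos : ∀ i ∈ s, 0 < f i := fun k hk ↦
    (hf k hk).lt_of_ne' (prod_ne_zero_iff.1 (h ▸ (prod_pos hg).ne') k hk)
  exact (prod_lt_prod hf_pos hfg ⟨i, hi, (hfg i hi).lt_of_ne hne⟩).ne h

theorem EuclideanSpace.basisFun_toBasis_det_apply {ι : Type*} [Fintype ι] [DecidableEq ι]
    (v : ι → EuclideanSpace ℝ ι) :
    (EuclideanSpace.basisFun ι ℝ).toBasis.det v = (Matrix.of fun i j ↦ v j i).det := by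
  rw [Basis.det_apply]
  rfl

namespace Orientation

variable {E : Type*} [NormedAddCommGroup E] [InnerProductSpace ℝ E] {n : ℕ}
  [Fact (finrank ℝ E = n)] (o : Orientation ℝ E (Fin n))

theorem pairwise_inner_eq_zero_of_abs_volumeForm_apply_eq_prod_norm {v : Fin n → E}
    (hv : ∀ i, v i ≠ 0) (h : |o.volumeForm v| = ∏ i, ‖v i‖) :
    Pairwise fun i j ↦ inner ℝ (v i) (v j) = 0 := by
  intro i j hij
  have hfinrank : finrank ℝ E = n := Fact.out
  have : FiniteDimensional ℝ E := Module.finite_of_finrank_pos (hfinrank ▸ i.pos)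
  have hdim : finrank ℝ E = Fintype.card (Fin n) := by simpa using hfinrank
  set b := InnerProductSpace.gramSchmidtOrthonormalBasis hdim v
  have hCS : ∀ k, |inner ℝ (b k) (v k)| ≤ ‖v k‖ := fun k ↦ by
    simpa [b.orthonormal.1 k] using abs_real_inner_le_norm (b k) (v k)
  have hprod : ∏ k, |inner ℝ (b k) (v k)| = ∏ k, ‖v k‖ := by
    rw [← h, o.volumeForm_robust' b, InnerProductSpace.gramSchmidtOrthonormalBasis_det, abs_prod]
  have hparallel : ∀ k, ∃ r : ℝ, r ≠ 0 ∧ v k = r • b k := fun k ↦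
    (norm_inner_eq_norm_iff (b.orthonormal.ne_zero k) (hv k)).1 <| by
      rw [Real.norm_eq_abs, b.orthonormal.1 k, one_mul]
      exact eq_of_prod_eq_prod_of_le (fun _ _ ↦ abs_nonneg _) (fun k _ ↦ hCS k)
        (fun k _ ↦ norm_pos_iff.2 (hv k)) hprod k (mem_univ k)
  obtain ⟨r, -, hr⟩ := hparallel i
  obtain ⟨s, -, hs⟩ := hparallel j
  rw [hr, hs, real_inner_smul_left, real_inner_smul_right, b.orthonormal.2 hij, mul_zero,
    mul_zero]

end Orientation

theorem equality_case_det
    {n : ℕ} [NeZero n] (x : Fin n → EuclideanSpace ℝ (Fin n))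
    (heq : (Matrix.of fun i j => x j i).det = ∑ i, ‖x i‖ ^ n / n) :
    (∀ i j, ‖x i‖ = ‖x j‖) ∧
      ((∃ i, ‖x i‖ ≠ 0) →
        (∀ i j, i ≠ j → inner ℝ (x i) (x j) = (0 : ℝ)) ∧
          0 < (Matrix.of fun i j => x j i).det) := by
  have : Fact (finrank ℝ (EuclideanSpace ℝ (Fin n)) = n) := ⟨finrank_euclideanSpace_fin⟩
  set D := (Matrix.of fun i j => x j i).det
  let o := (EuclideanSpace.basisFun (Fin n) ℝ).toBasis.orientation
  have hvol : o.volumeForm x = D := by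
    rw [o.volumeForm_robust _ rfl, EuclideanSpace.basisFun_toBasis_det_apply]
  have hhadamard : D ≤ ∏ i, ‖x i‖ := hvol ▸ o.volumeForm_apply_le x
  have hamgm : ∏ i, ‖x i‖ ≤ D := by
    simpa [heq] using Real.prod_le_sum_pow_card_div_card fun i ↦ norm_nonneg (x i)
  have hD : D = ∏ i, ‖x i‖ := hhadamard.antisymm hamgm
  have hnorms : ∀ i j, ‖x i‖ = ‖x j‖ :=
    Real.eq_of_sum_pow_card_div_card_le_prod (fun i ↦ norm_nonneg (x i))
      (by simpa [← heq] using hD.le)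
  refine ⟨hnorms, fun ⟨k, hk⟩ ↦ ?_⟩
  have hx : ∀ i, x i ≠ 0 := fun i ↦ norm_ne_zero_iff.1 (hnorms i k ▸ hk)
  have hvol_abs : |o.volumeForm x| = ∏ i, ‖x i‖ := by
    rw [hvol, hD, abs_of_nonneg (prod_nonneg fun i _ ↦ norm_nonneg (x i))]
  exact ⟨fun _ _ hij ↦
      o.pairwise_inner_eq_zero_of_abs_volumeForm_apply_eq_prod_norm hx hvol_abs hij,
    hD ▸ prod_pos fun i _ ↦ norm_pos_iff.2 (hx i)⟩
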